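/- Let N be a finite connected graph. Then the graph obtained from N by contracting each blob to a single node (i.e., removing all edges of each blob and identifying all of its nodes) is a tree, i.e., it is connected and has no cycles. -/

import Mathlib

/-!
# Common framework

Finite directed multigraphs, undirected connectivity, numbers of connected
components, cut edges, subgraphs, blobs, blobs determined by leaf sets,
B-quartets, and quartets displayed via cut-edge separation.

A *network* is modelled as a finite directed multigraph (edge directions are
simply ignored for the undirected notions of connectivity, cut edges and
blobs).
-/

/-- A finite directed multigraph: finite types of nodes and of edges, with
source and target maps. -/
structure MDigraph where
  V : Type
  E : Type
  finV : Finite V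
  finE : Finite E
  src : E → V
  tgt : E → V

attribute [instance] MDigraph.finV MDigraph.finE

namespace MDigraph

section Basic

variable (G : MDigraph)

/-- One undirected step between `u` and `v` along an edge from the set `F`. -/
def Step (F : Set G.E) (u v : G.V) : Prop :=
  ∃ e ∈ F, (G.src e = u ∧ G.tgt e = v) ∨ (G.src e = v ∧ G.tgt e = u)

/-- Undirected reachability (an undirected path) using only edges in `F`. -/
def Conn (F : Set G.E) (u v : G.V) : Prop :=
  Relation.ReflTransGen (G.Step F) u v

/-- One directed step from `u` to `v` along an edge from the set `F`. -/
def DStep (F : Set G.E) (u v : G.V) : Prop :=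
  ∃ e ∈ F, G.src e = u ∧ G.tgt e = v

/-- Directed reachability (a directed path) using only edges in `F`. -/
def DConn (F : Set G.E) (u v : G.V) : Prop :=
  Relation.ReflTransGen (G.DStep F) u v

/-- `u` is above (ancestral to) `v`: there is a directed path from `u` to `v`. -/
def Above (u v : G.V) : Prop := G.DConn Set.univ u v

/-- In-degree of a node. -/
noncomputable def inDeg (v : G.V) : ℕ := Nat.card {e : G.E // G.tgt e = v}

/-- Out-degree of a node. -/
noncomputable def outDeg (v : G.V) : ℕ := Nat.card {e : G.E // G.src e = v}

/-- Undirected degree of a node (a loop counts twice). -/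
noncomputable def degree (v : G.V) : ℕ := G.inDeg v + G.outDeg v

/-- The number of connected components of the graph with node set `W` and edge
set the restriction to `W` of `F` (two nodes of `W` lie in the same connected
component iff they are joined by an undirected path). -/
noncomputable def numComponents (W : Set G.V) (F : Set G.E) : ℕ :=
  Nat.card (Quot (fun u v : W => G.Step {e ∈ F | G.src e ∈ W ∧ G.tgt e ∈ W} u.1 v.1))

/-- `v` lies on every directed path from `u` to `w`: there is no directed path
from `u` to `w` all of whose nodes avoid `v`. -/
def OnEveryPath (v u w : G.V) : Prop :=
  ¬ (u ≠ v ∧ w ≠ v ∧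
      Relation.ReflTransGen (fun a b => G.DStep Set.univ a b ∧ a ≠ v ∧ b ≠ v) u w)

end Basic

/-- A subgraph (subnetwork): a set of nodes together with a set of edges
joining them. -/
structure Subgraph (G : MDigraph) where
  verts : Set G.V
  edges : Set G.E
  src_mem : ∀ e ∈ edges, G.src e ∈ verts
  tgt_mem : ∀ e ∈ edges, G.tgt e ∈ verts

/-- The whole graph, as a subgraph of itself. -/
def top (G : MDigraph) : Subgraph G :=
  ⟨Set.univ, Set.univ, fun _ _ => Set.mem_univ _, fun _ _ => Set.mem_univ _⟩

namespace Subgraph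

variable {G : MDigraph}

/-- Containment of subgraphs. -/
def le (H K : Subgraph G) : Prop := H.verts ⊆ K.verts ∧ H.edges ⊆ K.edges

/-- The subgraph `H` is connected. -/
def IsConnected (H : Subgraph G) : Prop :=
  H.verts.Nonempty ∧ ∀ u ∈ H.verts, ∀ v ∈ H.verts, G.Conn H.edges u v

/-- Delete an edge from a subgraph. -/
def deleteEdge (H : Subgraph G) (e : G.E) : Subgraph G :=
  ⟨H.verts, H.edges \ {e}, fun e' he' => H.src_mem e' he'.1,
    fun e' he' => H.tgt_mem e' he'.1⟩

/-- The number of connected components of a subgraph. -/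
noncomputable def numComponents (H : Subgraph G) : ℕ :=
  G.numComponents H.verts H.edges

/-- `e` is a cut edge of the (sub)graph `H`: deleting it increases the number
of connected components. -/
def IsCutEdge (H : Subgraph G) (e : G.E) : Prop :=
  e ∈ H.edges ∧ H.numComponents < (H.deleteEdge e).numComponents

end Subgraph

variable {G : MDigraph}

/-- `B` is a blob of the network `H`: a maximal connected subnetwork of `H`
having no cut edges.  (A blob is *trivial* if it consists of a single node.) -/
def IsBlobIn (H B : Subgraph G) : Prop :=
  B.le H ∧ B.IsConnected ∧ (∀ e, ¬ B.IsCutEdge e) ∧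
    ∀ B' : Subgraph G, B'.le H → B'.IsConnected → (∀ e, ¬ B'.IsCutEdge e) →
      B.le B' → B'.le B

/-- `e` is a cut edge of the network `H` incident to the blob `B`: exactly one
of its endpoints is a node of `B`. -/
def IncidentCut (H B : Subgraph G) (e : G.E) : Prop :=
  H.IsCutEdge e ∧ Xor' (G.src e ∈ B.verts) (G.tgt e ∈ B.verts)

/-- The blob `B` of the network `H` is determined by the set `S` of leaf
labels: deletion of the cut edges of `H` incident to `B` leaves the nodes
labelled by the elements of `S` in distinct connected components. -/
def DeterminesIn {X : Type} (H B : Subgraph G) (leaf : X → G.V) (S : Set X) : Prop :=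
  ∀ s ∈ S, ∀ t ∈ S, s ≠ t →
    ¬ G.Conn {e ∈ H.edges | ¬ IncidentCut H B e} (leaf s) (leaf t)

/-- Four taxa form a B-quartet on the network `H`: some blob of `H` is
determined by them. -/
def BQuartetIn {X : Type} (H : Subgraph G) (leaf : X → G.V) (a b c d : X) : Prop :=
  ∃ B : Subgraph G, IsBlobIn H B ∧ DeterminesIn H B leaf ({a, b, c, d} : Set X)

/-- Some cut edge of `H` separates the taxa `p, q` from the taxa `r, s`: after
its deletion `p, q` lie in one connected component and `r, s` in another.  For
a 4-taxon set `{p,q,r,s}` this says exactly that the (reduced unrooted) tree of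
blobs of `H` displays the resolved quartet `pq|rs` (the edges of the tree of
blobs correspond exactly to the cut edges of the network, and suppressing
degree-2 nodes or contracting blobs does not affect which taxa a cut edge
separates). -/
def CutSep {X : Type} (H : Subgraph G) (leaf : X → G.V) (p q r s : X) : Prop :=
  ∃ e, H.IsCutEdge e ∧
    G.Conn (H.edges \ {e}) (leaf p) (leaf q) ∧
    G.Conn (H.edges \ {e}) (leaf r) (leaf s) ∧
    ¬ G.Conn (H.edges \ {e}) (leaf p) (leaf r)

end MDigraph

open MDigraph

/-- The tree of blobs of `G`: the graph obtained by contracting each blob of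
`G` to a single node, i.e. by removing all of each blob's edges and
identifying all of its nodes.  Two nodes lie in the same blob exactly when
they are joined by a path of non-cut edges, so the node set is the quotient of
`G.V` identifying nodes joined by non-cut edges, and the remaining edges are
precisely the cut edges of `G`. -/
noncomputable def blobContraction (G : MDigraph) : MDigraph where
  V := Quot (G.Step {e | ¬ (top G).IsCutEdge e})
  E := {e : G.E // (top G).IsCutEdge e}
  finV := Finite.of_surjective (Quot.mk _) Quot.exists_rep
  finE := inferInstance
  src := fun e => Quot.mk _ (G.src e.1)
  tgt := fun e => Quot.mk _ (G.tgt e.1)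


/-! Two nodes are identified in the tree of blobs exactly when a path of non-cut edges joins
them, so paths of `G` project to paths of the contraction, and a path of the contraction that
avoids a cut edge `e` lifts to a path of `G` that avoids `e`. Such a lifted path would join the
endpoints of `e`, and an edge whose endpoints are joined without it is not a cut edge, since
deleting it leaves the connected components unchanged. -/

theorem Nat.card_quot_eq_of_le_of_le_eqvGen {α : Type*} {r s : α → α → Prop}
    (hrs : ∀ a b, r a b → s a b) (hsr : ∀ a b, s a b → Relation.EqvGen r a b) :
    Nat.card (Quot r) = Nat.card (Quot s) :=
  Nat.card_congr
    { toFun := Quot.factor r s hrs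
      invFun := Quot.lift (Quot.mk r) fun a b h => Quot.eqvGen_sound (hsr a b h)
      left_inv := by rintro ⟨a⟩; rfl
      right_inv := by rintro ⟨a⟩; rfl }

namespace MDigraph

variable {G : MDigraph}

instance (F : Set G.E) : Std.Symm (G.Step F) where
  symm _ _ := fun ⟨e, he, h⟩ => ⟨e, he, h.symm⟩

theorem Conn.symm {F : Set G.E} {u v : G.V} (h : G.Conn F u v) : G.Conn F v u :=
  Std.Symm.symm (r := Relation.ReflTransGen (G.Step F)) _ _ h

theorem Step.mono {F F' : Set G.E} (hF : F ⊆ F') {u v : G.V} : G.Step F u v → G.Step F' u v :=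
  fun ⟨e, he, h⟩ => ⟨e, hF he, h⟩

theorem Conn.mono {F F' : Set G.E} (hF : F ⊆ F') {u v : G.V} (h : G.Conn F u v) :
    G.Conn F' u v :=
  Relation.ReflTransGen.mono (fun _ _ => Step.mono hF) _ _ h

theorem conn_of_quot_mk_eq {F : Set G.E} {u v : G.V}
    (h : Quot.mk (G.Step F) u = Quot.mk (G.Step F) v) : G.Conn F u v := by
  rw [Conn, ← Relation.EqvGen.eqvGen_eq_reflTransGen]
  exact Quot.eqvGen_exact h

theorem eqvGen_of_conn {W : Set G.V} {F : Set G.E} {u v : G.V}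
    (h : G.Conn {e ∈ F | G.src e ∈ W ∧ G.tgt e ∈ W} u v) (hu : u ∈ W) (hv : v ∈ W) :
    Relation.EqvGen (fun a b : W => G.Step {e ∈ F | G.src e ∈ W ∧ G.tgt e ∈ W} a.1 b.1)
      ⟨u, hu⟩ ⟨v, hv⟩ := by
  induction h with
  | refl => exact .refl _
  | @tail b c _ hbc ih =>
    have hb : b ∈ W := by
      obtain ⟨e, ⟨-, hsrc, htgt⟩, ⟨rfl, -⟩ | ⟨-, rfl⟩⟩ := hbc <;> assumption
    exact .trans _ _ _ (ih hb) (.rel _ _ hbc)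

theorem numComponents_diff_singleton {W : Set G.V} {F : Set G.E} {e : G.E}
    (h : G.Conn {e' ∈ F \ {e} | G.src e' ∈ W ∧ G.tgt e' ∈ W} (G.src e) (G.tgt e)) :
    G.numComponents W (F \ {e}) = G.numComponents W F := by
  refine Nat.card_quot_eq_of_le_of_le_eqvGen
    (fun _ _ => Step.mono fun e' he' => Set.mem_sep he'.1.1 he'.2) ?_
  rintro ⟨a, ha⟩ ⟨b, hb⟩ ⟨e', ⟨he'F, hsrc, htgt⟩, hends⟩
  by_cases he' : e' = e
  · subst he'
    rcases hends with ⟨rfl, rfl⟩ | ⟨rfl, rfl⟩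
    · exact eqvGen_of_conn h ha hb
    · exact (eqvGen_of_conn h hb ha).symm
  · exact .rel _ _ (⟨e', Set.mem_sep (Set.mem_sdiff_of_mem he'F he') ⟨hsrc, htgt⟩, hends⟩ :
      G.Step _ a b)

theorem Subgraph.not_isCutEdge_of_conn (H : Subgraph G) {e : G.E}
    (h : G.Conn (H.edges \ {e}) (G.src e) (G.tgt e)) : ¬ H.IsCutEdge e := by
  rintro ⟨-, hlt⟩
  have hpath : G.Conn {e' ∈ H.edges \ {e} | G.src e' ∈ H.verts ∧ G.tgt e' ∈ H.verts}
      (G.src e) (G.tgt e) :=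
    h.mono fun e' he' => Set.mem_sep he' ⟨H.src_mem e' he'.1, H.tgt_mem e' he'.1⟩
  exact hlt.ne' (numComponents_diff_singleton hpath)

theorem blobContraction_conn_mk {a b : G.V} (h : G.Conn Set.univ a b) :
    (blobContraction G).Conn Set.univ (Quot.mk _ a) (Quot.mk _ b) := by
  induction h with
  | refl => exact .refl
  | @tail b c _ hbc ih =>
    obtain ⟨e, -, hends⟩ := hbc
    by_cases he : (top G).IsCutEdge e
    · refine ih.tail ⟨⟨e, he⟩, trivial, ?_⟩
      rcases hends with ⟨rfl, rfl⟩ | ⟨rfl, rfl⟩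
      exacts [Or.inl ⟨rfl, rfl⟩, Or.inr ⟨rfl, rfl⟩]
    · have hbc : Quot.mk (G.Step {e | ¬ (top G).IsCutEdge e}) b = Quot.mk _ c :=
        Quot.sound ⟨e, he, hends⟩
      rwa [← hbc]

theorem exists_step_of_blobContraction_step {F : Set (blobContraction G).E}
    {x y : (blobContraction G).V} (h : (blobContraction G).Step F x y) :
    ∃ u v, Quot.mk _ u = x ∧ Quot.mk _ v = y ∧ G.Step (Subtype.val '' F) u v := by
  obtain ⟨e, he, ⟨rfl, rfl⟩ | ⟨rfl, rfl⟩⟩ := h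
  · exact ⟨_, _, rfl, rfl, e.1, Set.mem_image_of_mem _ he, Or.inl ⟨rfl, rfl⟩⟩
  · exact ⟨_, _, rfl, rfl, e.1, Set.mem_image_of_mem _ he, Or.inr ⟨rfl, rfl⟩⟩

theorem conn_of_blobContraction_conn {F : Set (blobContraction G).E} {a b : G.V}
    {y : (blobContraction G).V} (h : (blobContraction G).Conn F (Quot.mk _ a) y)
    (hb : Quot.mk _ b = y) :
    G.Conn ({e | ¬ (top G).IsCutEdge e} ∪ Subtype.val '' F) a b := by
  induction h generalizing b with
  | refl => exact (conn_of_quot_mk_eq hb.symm).mono Set.subset_union_left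
  | tail _ hstep ih =>
    obtain ⟨u, v, rfl, rfl, huv⟩ := exists_step_of_blobContraction_step hstep
    exact ((ih rfl).tail (huv.mono Set.subset_union_right)).trans
      ((conn_of_quot_mk_eq hb.symm).mono Set.subset_union_left)

end MDigraph

/-- A finite multigraph has no cycles iff no edge has its two endpoints joined by a path
avoiding that edge. -/
theorem stmt_6 (G : MDigraph) (hconn : ∀ u v, G.Conn Set.univ u v) :
    (∀ u v, (blobContraction G).Conn Set.univ u v) ∧
    (∀ e, ¬ (blobContraction G).Conn (Set.univ \ {e})
        ((blobContraction G).src e) ((blobContraction G).tgt e)) := by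
  refine ⟨?_, ?_⟩
  · rintro ⟨a⟩ ⟨b⟩
    exact blobContraction_conn_mk (hconn a b)
  · rintro ⟨e, he⟩ hcycle
    have havoid : {e' | ¬ (top G).IsCutEdge e'} ∪ Subtype.val '' (Set.univ \ {⟨e, he⟩}) ⊆
        (top G).edges \ {e} := by
      rintro e' (hnc | ⟨e', he', rfl⟩)
      · exact ⟨trivial, fun h => hnc (by rwa [Set.mem_singleton_iff.mp h])⟩
      · exact ⟨trivial, fun h => he'.2 (Subtype.ext h)⟩
    exact (top G).not_isCutEdge_of_conn ((conn_of_blobContraction_conn hcycle rfl).mono havoid) he
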